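/- arXiv:1908.11464 — 3 statements merged into one kernel-verified Lean document; each statement's English description precedes it below -/
import Mathlib

section
/- Let V ∈ ℝ^{p×p} be a symmetric matrix satisfying the restricted eigenvalue condition RE(γ, τ) for some γ > 0 and τ > 0, and let M ≥ 1. Then the symmetric matrix I_M ⊗ V ∈ ℝ^{Mp×Mp} (Kronecker product of the M×M identity with V) also satisfies the restricted eigenvalue condition RE(γ, τ): for every θ ∈ ℝ^{Mp}, θᵀ(I_M ⊗ V)θ ≥ γ‖θ‖₂² − τ‖θ‖₁². -/
open Matrix Finset
open Kronecker

noncomputable section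

/-- Restricted eigenvalue condition RE(γ, τ):
θᵀSθ ≥ γ‖θ‖₂² − τ‖θ‖₁² for all θ. -/
def RECond {q : Type*} [Fintype q] (S : Matrix q q ℝ) (γ τ : ℝ) : Prop :=
  ∀ θ : q → ℝ, θ ⬝ᵥ S.mulVec θ ≥ γ * (∑ i, (θ i) ^ 2) - τ * (∑ i, |θ i|) ^ 2

/-- **The restricted eigenvalue condition is inherited by I_M ⊗ V.**
If a symmetric matrix V ∈ ℝ^{p×p} satisfies RE(γ, τ) with γ, τ > 0 and M ≥ 1, then
the Kronecker product I_M ⊗ V ∈ ℝ^{Mp×Mp} also satisfies RE(γ, τ). -/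
theorem kronecker_id_RE {p M : ℕ} (hM : 1 ≤ M) (V : Matrix (Fin p) (Fin p) ℝ)
    (hsymm : V.IsSymm) {γ τ : ℝ} (hγ : 0 < γ) (hτ : 0 < τ)
    (hRE : RECond V γ τ) :
    RECond ((1 : Matrix (Fin M) (Fin M) ℝ) ⊗ₖ V) γ τ := by
  intro θ
  have key : θ ⬝ᵥ ((1 : Matrix (Fin M) (Fin M) ℝ) ⊗ₖ V).mulVec θ
      = ∑ m : Fin M, (fun i => θ (m, i)) ⬝ᵥ V.mulVec (fun i => θ (m, i)) := by
    simp [dotProduct, mulVec, kroneckerMap_apply, Fintype.sum_prod_type,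
      one_apply, ite_mul, one_mul, zero_mul, mul_ite, mul_zero,
      Finset.sum_ite_eq, Finset.sum_ite_eq']
  have h2 : ∀ m : Fin M,
      (fun i => θ (m, i)) ⬝ᵥ V.mulVec (fun i => θ (m, i))
        ≥ γ * (∑ i, (θ (m, i)) ^ 2) - τ * (∑ i, |θ (m, i)|) ^ 2 :=
    fun m => hRE _
  have hsumsq : ∑ m : Fin M, (∑ i, |θ (m, i)|) ^ 2
      ≤ (∑ x : Fin M × Fin p, |θ x|) ^ 2 := by
    rw [Fintype.sum_prod_type]
    have hnn : ∀ m : Fin M, 0 ≤ ∑ i, |θ (m, i)| :=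
      fun m => Finset.sum_nonneg fun i _ => abs_nonneg _
    calc ∑ m : Fin M, (∑ i, |θ (m, i)|) ^ 2
        ≤ ∑ m : Fin M, (∑ i, |θ (m, i)|) * (∑ n : Fin M, ∑ i, |θ (n, i)|) := by
          apply Finset.sum_le_sum
          intro m _
          rw [sq]
          exact mul_le_mul_of_nonneg_left
            (Finset.single_le_sum (fun n _ => hnn n) (Finset.mem_univ m)) (hnn m)
      _ = (∑ m : Fin M, ∑ i, |θ (m, i)|) ^ 2 := by rw [← Finset.sum_mul, sq]
  calc θ ⬝ᵥ ((1 : Matrix (Fin M) (Fin M) ℝ) ⊗ₖ V).mulVec θ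
      = ∑ m : Fin M, (fun i => θ (m, i)) ⬝ᵥ V.mulVec (fun i => θ (m, i)) := key
    _ ≥ ∑ m : Fin M, (γ * (∑ i, (θ (m, i)) ^ 2) - τ * (∑ i, |θ (m, i)|) ^ 2) :=
        Finset.sum_le_sum fun m _ => h2 m
    _ = γ * (∑ x : Fin M × Fin p, (θ x) ^ 2)
        - τ * ∑ m : Fin M, (∑ i, |θ (m, i)|) ^ 2 := by
        rw [Finset.sum_sub_distrib, ← Finset.mul_sum, ← Finset.mul_sum,
          Fintype.sum_prod_type]
    _ ≥ γ * (∑ x : Fin M × Fin p, (θ x) ^ 2) - τ * (∑ x, |θ x|) ^ 2 := by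
        have := mul_le_mul_of_nonneg_left hsumsq hτ.le
        linarith
end
end

section
/- There exist universal constants c₀ > 0 and c₁ > 0 such that the following holds. Let q ≥ 1, let S ∈ ℝ^{q×q} be a symmetric positive semidefinite matrix satisfying the restricted eigenvalue condition RE(γ, τ) with γ > 0, τ > 0, let r ∈ ℝ^q, let β* ∈ ℝ^q with ‖β*‖₀ = s ≥ 1 and s τ ≤ c₀ γ, and let λ ≥ 4‖r − Sβ*‖_∞ with λ > 0. Then every global minimizer β̃ of the function β ↦ −2βᵀr + βᵀSβ + λ‖β‖₁ satisfies ‖β̃ − β*‖₂ ≤ c₁ √s · λ/γ and ‖β̃ − β*‖₁ ≤ c₁ s · λ/γ. -/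
open Matrix Finset

noncomputable section

set_option maxHeartbeats 1000000 in
/-- **Deterministic LASSO estimation-error bound under RE and deviation conditions.**
There are universal constants c₀, c₁ > 0 such that: if S is symmetric positive
semidefinite satisfying RE(γ, τ), β* is s-sparse with s ≥ 1 and sτ ≤ c₀γ, and
λ ≥ 4‖r − Sβ*‖_∞ with λ > 0, then every global minimizer β̃ of
β ↦ −2βᵀr + βᵀSβ + λ‖β‖₁ satisfies
‖β̃ − β*‖₂ ≤ c₁√s · λ/γ and ‖β̃ − β*‖₁ ≤ c₁ s · λ/γ. -/
theorem lasso_estimation_error_bound :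
    ∃ c₀ c₁ : ℝ, 0 < c₀ ∧ 0 < c₁ ∧
      ∀ (q : ℕ), 1 ≤ q →
      ∀ (S : Matrix (Fin q) (Fin q) ℝ), S.PosSemidef →
      ∀ (γ τ : ℝ), 0 < γ → 0 < τ → RECond S γ τ →
      ∀ (r : Fin q → ℝ) (β : Fin q → ℝ) (s : ℕ),
        Nat.card {j : Fin q // β j ≠ 0} = s → 1 ≤ s →
        (s : ℝ) * τ ≤ c₀ * γ →
      ∀ lam : ℝ, 0 < lam →
        lam ≥ 4 * ⨆ j : Fin q, |r j - S.mulVec β j| →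
      ∀ βt : Fin q → ℝ,
        (∀ β' : Fin q → ℝ,
          -2 * (βt ⬝ᵥ r) + βt ⬝ᵥ S.mulVec βt + lam * ∑ j, |βt j|
            ≤ -2 * (β' ⬝ᵥ r) + β' ⬝ᵥ S.mulVec β' + lam * ∑ j, |β' j|) →
        Real.sqrt (∑ j, (βt j - β j) ^ 2) ≤ c₁ * Real.sqrt s * lam / γ ∧
        (∑ j, |βt j - β j|) ≤ c₁ * s * lam / γ := by
  classical
  refine ⟨1/32, 12, by norm_num, by norm_num, ?_⟩
  intro q hq S hS γ τ hγ hτ hRE r β s hcard hs hsτ lam hlam hlam4 βt hmin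
  obtain ⟨v, hv⟩ : ∃ v : Fin q → ℝ, v = fun j => βt j - β j := ⟨_, rfl⟩
  obtain ⟨J, hJ⟩ : ∃ J : Finset (Fin q),
      J = Finset.univ.filter (fun j => β j ≠ 0) := ⟨_, rfl⟩
  have hJcard : J.card = s := by
    rw [hJ, ← hcard, Nat.card_eq_fintype_card, Fintype.card_subtype]
  obtain ⟨a, ha⟩ : ∃ x : ℝ, x = ∑ j ∈ J, |v j| := ⟨_, rfl⟩
  obtain ⟨Jc, hJc⟩ : ∃ Jc : Finset (Fin q),
      Jc = Finset.univ.filter (fun j => ¬ β j ≠ 0) := ⟨_, rfl⟩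
  obtain ⟨b, hb⟩ : ∃ x : ℝ, x = ∑ j ∈ Jc, |v j| := ⟨_, rfl⟩
  have hsplit : ∀ f : Fin q → ℝ,
      (∑ j ∈ J, f j) + ∑ j ∈ Jc, f j = ∑ j, f j := fun f => by
    rw [hJ, hJc]; exact Finset.sum_filter_add_sum_filter_not _ _ f
  have hL1 : (∑ j, |v j|) = a + b := by
    rw [ha, hb]; exact (hsplit fun j => |v j|).symm
  have ha0 : 0 ≤ a := ha ▸ Finset.sum_nonneg fun _ _ => abs_nonneg _
  have hb0 : 0 ≤ b := hb ▸ Finset.sum_nonneg fun _ _ => abs_nonneg _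
  obtain ⟨E2, hE2⟩ : ∃ x : ℝ, x = ∑ j, (v j) ^ 2 := ⟨_, rfl⟩
  have hE20 : 0 ≤ E2 := hE2 ▸ Finset.sum_nonneg fun _ _ => sq_nonneg _
  obtain ⟨N2, hN2⟩ : ∃ x : ℝ, x = Real.sqrt E2 := ⟨_, rfl⟩
  have hN2sq : N2 ^ 2 = E2 := hN2 ▸ Real.sq_sqrt hE20
  have hN20 : 0 ≤ N2 := hN2 ▸ Real.sqrt_nonneg _
  -- symmetry of the bilinear form
  have hST : Sᵀ = S := by
    have h := hS.1
    simpa [Matrix.IsHermitian, Matrix.conjTranspose_eq_transpose_of_trivial] using h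
  have hsymm : ∀ x y : Fin q → ℝ, x ⬝ᵥ S.mulVec y = y ⬝ᵥ S.mulVec x := by
    intro x y
    rw [Matrix.dotProduct_mulVec]
    nth_rewrite 1 [← hST]
    rw [Matrix.vecMul_transpose, dotProduct_comm]
  have hβt : βt = β + v := by funext j; simp [hv]
  have hquad : βt ⬝ᵥ S.mulVec βt
      = β ⬝ᵥ S.mulVec β + 2 * (v ⬝ᵥ S.mulVec β) + v ⬝ᵥ S.mulVec v := by
    rw [hβt, Matrix.mulVec_add, dotProduct_add, add_dotProduct,
      add_dotProduct, hsymm β v]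
    ring
  have hβtr : βt ⬝ᵥ r = β ⬝ᵥ r + v ⬝ᵥ r := by rw [hβt, add_dotProduct]
  have hvr : v ⬝ᵥ (r - S.mulVec β) = v ⬝ᵥ r - v ⬝ᵥ S.mulVec β :=
    dotProduct_sub _ _ _
  -- basic inequality
  have hbasic : v ⬝ᵥ S.mulVec v
      ≤ 2 * (v ⬝ᵥ (r - S.mulVec β)) + lam * (∑ j, |β j|) - lam * (∑ j, |βt j|) := by
    have h := hmin β
    rw [hquad, hβtr] at h
    linarith [hvr, h]
  -- deviation bound
  have hdev : ∀ j, |r j - S.mulVec β j| ≤ lam / 4 := by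
    intro j
    have hbdd : BddAbove (Set.range fun j : Fin q => |r j - S.mulVec β j|) :=
      Set.Finite.bddAbove (Set.finite_range _)
    have h := le_ciSup hbdd j
    linarith
  have hT : v ⬝ᵥ (r - S.mulVec β) ≤ (a + b) * (lam / 4) := by
    calc v ⬝ᵥ (r - S.mulVec β) = ∑ j, v j * (r j - S.mulVec β j) := by
          simp [dotProduct]
      _ ≤ ∑ j, |v j| * (lam / 4) := by
          refine Finset.sum_le_sum fun j _ => ?_
          calc v j * (r j - S.mulVec β j) ≤ |v j * (r j - S.mulVec β j)| := le_abs_self _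
            _ = |v j| * |r j - S.mulVec β j| := abs_mul _ _
            _ ≤ |v j| * (lam / 4) :=
                mul_le_mul_of_nonneg_left (hdev j) (abs_nonneg _)
      _ = (a + b) * (lam / 4) := by rw [← Finset.sum_mul, hL1]
  -- ℓ¹ decomposition bound
  have hD : (∑ j, |β j|) - (∑ j, |βt j|) ≤ a - b := by
    have e : (∑ j, |β j|) - (∑ j, |βt j|)
        = (∑ j ∈ J, (|β j| - |βt j|)) + ∑ j ∈ Jc, (|β j| - |βt j|) := by
      rw [hsplit fun j => |β j| - |βt j|, Finset.sum_sub_distrib]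
    have h1 : (∑ j ∈ J, (|β j| - |βt j|)) ≤ a := by
      rw [ha]
      refine Finset.sum_le_sum fun j _ => ?_
      calc |β j| - |βt j| ≤ |β j - βt j| := abs_sub_abs_le_abs_sub _ _
        _ = |v j| := by rw [abs_sub_comm, hv]
    have h2 : (∑ j ∈ Jc, (|β j| - |βt j|)) = -b := by
      rw [hb, ← Finset.sum_neg_distrib]
      refine Finset.sum_congr rfl fun j hj => ?_
      have hβ0 : β j = 0 := by
        simp only [hJc, Finset.mem_filter, not_not] at hj
        exact hj.2
      simp [hβ0, hv]
    linarith [e, h1, h2.le, h2.ge]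
  have hprod : lam * (∑ j, |β j|) - lam * (∑ j, |βt j|) ≤ lam * a - lam * b := by
    have h := mul_le_mul_of_nonneg_left hD hlam.le
    rw [mul_sub, mul_sub] at h
    linarith
  obtain ⟨Q, hQ⟩ : ∃ x : ℝ, x = v ⬝ᵥ S.mulVec v := ⟨_, rfl⟩
  have hQ2 : Q ≤ 3/2 * lam * a - 1/2 * lam * b := by
    rw [hQ]; nlinarith [hbasic, hT, hprod]
  have hQ0 : 0 ≤ Q := by
    rw [hQ]
    have h := hS.dotProduct_mulVec_nonneg v
    simpa using h
  have hb3a : b ≤ 3 * a := by nlinarith [hQ0, hQ2, hlam]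
  -- Cauchy–Schwarz on the support
  have hCS : a ^ 2 ≤ (s : ℝ) * E2 := by
    have h1 : a ^ 2 ≤ (J.card : ℝ) * ∑ j ∈ J, |v j| ^ 2 := by
      rw [ha]
      exact_mod_cast sq_sum_le_card_mul_sum_sq (s := J) (f := fun j => |v j|)
    have h2 : (∑ j ∈ J, |v j| ^ 2) ≤ E2 := by
      rw [hE2]
      refine Finset.sum_le_sum_of_subset_of_nonneg (Finset.subset_univ J)
        (fun j _ _ => sq_nonneg _) |>.trans_eq ?_
      exact Finset.sum_congr rfl fun j _ => by rw [sq_abs]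
    calc a ^ 2 ≤ (J.card : ℝ) * ∑ j ∈ J, |v j| ^ 2 := h1
      _ = (s : ℝ) * ∑ j ∈ J, |v j| ^ 2 := by rw [hJcard]
      _ ≤ (s : ℝ) * E2 := by
          have hs0 : (0:ℝ) ≤ (s:ℝ) := Nat.cast_nonneg s
          exact mul_le_mul_of_nonneg_left h2 hs0
  have haN : a ≤ Real.sqrt s * N2 := by
    rw [hN2]
    have h1 : a ≤ Real.sqrt ((s : ℝ) * E2) := by
      rw [← Real.sqrt_sq ha0]
      exact Real.sqrt_le_sqrt hCS
    rwa [Real.sqrt_mul (Nat.cast_nonneg s)] at h1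
  -- restricted eigenvalue step
  have hREv : Q ≥ γ * E2 - τ * (a + b) ^ 2 := by
    have h := hRE v
    rw [hQ, hE2]
    rwa [hL1] at h
  have h16 : (a + b) ^ 2 ≤ 16 * ((s : ℝ) * E2) := by
    nlinarith [mul_nonneg (by linarith : (0:ℝ) ≤ 3 * a - b)
      (by linarith : (0:ℝ) ≤ 5 * a + b), hCS]
  have hhalf : γ / 2 * E2 ≤ Q := by
    have h1 := mul_le_mul_of_nonneg_left h16 hτ.le
    have h2 := mul_le_mul_of_nonneg_right hsτ (by positivity : (0:ℝ) ≤ 16 * E2)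
    nlinarith [hREv, h1, h2]
  -- conclude
  have hmain : γ / 2 * (N2 ^ 2) ≤ 3/2 * lam * (Real.sqrt s * N2) := by
    have h1 := mul_le_mul_of_nonneg_left haN hlam.le
    rw [hN2sq]
    nlinarith [hhalf, hQ2, mul_nonneg hlam.le hb0, h1]
  have hγN : γ * N2 ≤ 3 * lam * Real.sqrt s := by
    rcases eq_or_lt_of_le hN20 with h0 | hpos
    · rw [← h0]
      have h := mul_nonneg hlam.le (Real.sqrt_nonneg (s:ℝ))
      nlinarith
    · nlinarith [hmain, hpos]
  have hss : Real.sqrt s * Real.sqrt s = (s : ℝ) :=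
    Real.mul_self_sqrt (Nat.cast_nonneg s)
  have hss3 : Real.sqrt s * (3 * lam * Real.sqrt s) = 3 * (s:ℝ) * lam := by
    linear_combination 3 * lam * hss
  have hE2eq : (∑ j, (βt j - β j) ^ 2) = E2 := by rw [hE2]; simp [hv]
  have hL1eq : (∑ j, |βt j - β j|) = a + b := by
    rw [← hL1]
    exact Finset.sum_congr rfl fun j _ => by simp [hv]
  constructor
  · rw [hE2eq, ← hN2, le_div_iff₀ hγ]
    linarith [hγN, mul_nonneg hlam.le (Real.sqrt_nonneg (s:ℝ))]
  · rw [hL1eq, le_div_iff₀ hγ]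
    have h2 := mul_le_mul_of_nonneg_left haN hγ.le
    have h3 := mul_le_mul_of_nonneg_left hγN (Real.sqrt_nonneg (s:ℝ))
    linarith [h2, h3, hss3,
      mul_nonneg (by linarith : (0:ℝ) ≤ 3 * a - b) hγ.le]
end
end

section
/- Let q ≥ 1, let S ∈ ℝ^{q×q} be symmetric positive semidefinite, let r ∈ ℝ^q, let β* ∈ ℝ^q with support J = Supp(β*), and let λ > 0 satisfy λ ≥ 4‖r − Sβ*‖_∞. Then every global minimizer β̃ of β ↦ −2βᵀr + βᵀSβ + λ‖β‖₁ satisfies the cone condition ‖(β̃ − β*)_{Jᶜ}‖₁ ≤ 3‖(β̃ − β*)_J‖₁, where v_J denotes the restriction of a vector v to the coordinates in J (with zeros elsewhere) and Jᶜ is the complement of J. -/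
open Matrix Finset

noncomputable section

/-- **Cone condition for the LASSO error vector.**
If S is symmetric positive semidefinite, λ > 0 and λ ≥ 4‖r − Sβ*‖_∞, then for every
global minimizer β̃ of β ↦ −2βᵀr + βᵀSβ + λ‖β‖₁, the error vector Δ = β̃ − β*
satisfies ‖Δ_{Jᶜ}‖₁ ≤ 3‖Δ_J‖₁, where J = Supp(β*). The restrictions to J and Jᶜ are
expressed via set indicators. -/
theorem lasso_cone_condition {q : ℕ} (hq : 1 ≤ q)
    (S : Matrix (Fin q) (Fin q) ℝ) (hS : S.PosSemidef)
    (r : Fin q → ℝ) (β : Fin q → ℝ)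
    (lam : ℝ) (hlam : 0 < lam)
    (hdev : lam ≥ 4 * ⨆ j : Fin q, |r j - S.mulVec β j|)
    (βt : Fin q → ℝ)
    (hmin : ∀ β' : Fin q → ℝ,
      -2 * (βt ⬝ᵥ r) + βt ⬝ᵥ S.mulVec βt + lam * ∑ j, |βt j|
        ≤ -2 * (β' ⬝ᵥ r) + β' ⬝ᵥ S.mulVec β' + lam * ∑ j, |β' j|) :
    (∑ j, Set.indicator {j : Fin q | β j = 0} (fun j => |βt j - β j|) j)
      ≤ 3 * ∑ j, Set.indicator {j : Fin q | β j ≠ 0} (fun j => |βt j - β j|) j := by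
  have : Nonempty (Fin q) := ⟨⟨0, hq⟩⟩
  set D : Fin q → ℝ := βt - β with hDdef
  set M : ℝ := ⨆ j : Fin q, |r j - S.mulVec β j| with hMdef
  have hMle : ∀ j, |r j - S.mulVec β j| ≤ M := fun j =>
    le_ciSup (f := fun j : Fin q => |r j - S.mulVec β j|) (Set.finite_range _).bddAbove j
  -- symmetry
  have hsT : Sᵀ = S := by
    have := hS.1
    simpa [Matrix.IsHermitian, Matrix.conjTranspose_eq_transpose_of_trivial] using this
  have hsymm : βt ⬝ᵥ S.mulVec β = β ⬝ᵥ S.mulVec βt := by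
    rw [Matrix.dotProduct_mulVec, ← Matrix.mulVec_transpose, hsT,
      dotProduct_comm]
  -- indicator sums
  set TJc : ℝ := ∑ j, Set.indicator {j : Fin q | β j = 0} (fun j => |βt j - β j|) j with hTJc
  set TJ : ℝ := ∑ j, Set.indicator {j : Fin q | β j ≠ 0} (fun j => |βt j - β j|) j with hTJ
  have hsplit : TJc + TJ = ∑ j, |D j| := by
    rw [hTJc, hTJ, ← Finset.sum_add_distrib]
    refine Finset.sum_congr rfl fun j _ => ?_
    by_cases h : β j = 0 <;>
      simp [Set.indicator_apply, Set.mem_setOf_eq, h, hDdef, Pi.sub_apply]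
  -- lower bound on ℓ1 difference
  have hl1 : TJc - TJ ≤ (∑ j, |βt j|) - ∑ j, |β j| := by
    rw [hTJc, hTJ, ← Finset.sum_sub_distrib, ← Finset.sum_sub_distrib]
    refine Finset.sum_le_sum fun j _ => ?_
    by_cases h : β j = 0
    · simp [Set.indicator_apply, Set.mem_setOf_eq, h]
    · have := abs_sub_abs_le_abs_sub (β j) (βt j)
      have habs : |β j - βt j| = |βt j - β j| := abs_sub_comm _ _
      simp only [Set.indicator_apply, Set.mem_setOf_eq, h, if_false, if_neg,
        not_true, if_true]
      simp [h]
      linarith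
  -- key inequality from minimality
  have hkey := hmin β
  have hexp : 2 * ((βt ⬝ᵥ r) - (β ⬝ᵥ r)) - ((βt ⬝ᵥ S.mulVec βt) - (β ⬝ᵥ S.mulVec β))
      = 2 * (D ⬝ᵥ (r - S.mulVec β)) - D ⬝ᵥ S.mulVec D := by
    rw [hDdef]
    simp only [sub_dotProduct, dotProduct_sub, Matrix.mulVec_sub]
    linear_combination hsymm
  have hpsd : 0 ≤ D ⬝ᵥ S.mulVec D := by
    have := hS.dotProduct_mulVec_nonneg D
    simpa using this
  have hdot : D ⬝ᵥ (r - S.mulVec β) ≤ M * ∑ j, |D j| := by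
    rw [Finset.mul_sum]
    refine Finset.sum_le_sum fun j _ => ?_
    calc D j * (r - S.mulVec β) j ≤ |D j * (r - S.mulVec β) j| := le_abs_self _
      _ = |(r - S.mulVec β) j| * |D j| := by rw [abs_mul, mul_comm]
      _ ≤ M * |D j| := by
          apply mul_le_mul_of_nonneg_right _ (abs_nonneg _)
          simpa [Pi.sub_apply] using hMle j
  have hsumnn : 0 ≤ ∑ j, |D j| := Finset.sum_nonneg fun j _ => abs_nonneg _
  have hM4 : 4 * M ≤ lam := hdev
  have hchain : lam * ((∑ j, |βt j|) - ∑ j, |β j|) ≤ (lam / 2) * ∑ j, |D j| := by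
    have h1 : lam * ((∑ j, |βt j|) - ∑ j, |β j|)
        ≤ 2 * (D ⬝ᵥ (r - S.mulVec β)) - D ⬝ᵥ S.mulVec D := by
      rw [← hexp]; linarith
    have h2 : 2 * (D ⬝ᵥ (r - S.mulVec β)) ≤ 2 * (M * ∑ j, |D j|) := by linarith
    have h3 : 2 * (M * ∑ j, |D j|) ≤ (lam / 2) * ∑ j, |D j| := by nlinarith
    linarith
  have hfinal : lam * (TJc - TJ) ≤ (lam / 2) * (TJc + TJ) := by
    have := mul_le_mul_of_nonneg_left hl1 hlam.le
    rw [hsplit]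
    linarith
  nlinarith
end
end
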